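/- Let Q be an integral commutative quantale, S a multiplicatively closed subset of Q, and P an ideal maximal among ideals disjoint from S (with respect to inclusion). Then P is a prime ideal. -/

import Mathlib

class ICQuantale (Q : Type*) extends CompleteLattice Q, Mul Q where
  mul_assoc : ∀ x y z : Q, x * y * z = x * (y * z)
  mul_comm : ∀ x y : Q, x * y = y * x
  mul_sSup : ∀ (x : Q) (s : Set Q), x * sSup s = ⨆ y ∈ s, x * y
  mul_top : ∀ x : Q, x * ⊤ = x

variable {Q : Type*} [ICQuantale Q]

def qpow (x : Q) : ℕ → Q
  | 0 => ⊤
  | n+1 => qpow x n * x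

def IsIdeal (I : Set Q) : Prop :=
  I.Nonempty ∧ (∀ x ∈ I, ∀ y ∈ I, x ⊔ y ∈ I) ∧ (∀ x ∈ I, ∀ l, l ≤ x → l ∈ I)

def res (I J : Set Q) : Set Q := {x | ∀ j ∈ J, x * j ∈ I}

def prodIdeal (I J : Set Q) : Set Q :=
  {l | ∃ F : Finset (Q × Q), (∀ p ∈ F, p.1 ∈ I ∧ p.2 ∈ J) ∧ l ≤ F.sup (fun p => p.1 * p.2)}

def rad (I : Set Q) : Set Q := {x | ∃ n, 1 ≤ n ∧ qpow x n ∈ I}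

def IsPrimeIdeal (P : Set Q) : Prop :=
  IsIdeal P ∧ P ≠ Set.univ ∧ ∀ x y : Q, x * y ∈ P → x ∈ P ∨ y ∈ P

def IsPrimaryIdeal (I : Set Q) : Prop :=
  IsIdeal I ∧ I ≠ Set.univ ∧ ∀ x y : Q, x * y ∈ I → x ∈ I ∨ ∃ n, 1 ≤ n ∧ qpow y n ∈ I

def MultClosed (S : Set Q) : Prop := ⊤ ∈ S ∧ ∀ x ∈ S, ∀ y ∈ S, x * y ∈ S

def ann (S : Set Q) : Set Q := {x | ∀ s ∈ S, x * s = ⊥}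

/-! A maximal `S`-disjoint ideal `P` is proper because `⊤ ∈ S`. If `x, y ∉ P`, maximality puts
elements `s₁ ≤ p₁ ⊔ x` and `s₂ ≤ p₂ ⊔ y` of `S` (with `pᵢ ∈ P`) into the ideals generated by
`P` and `x`, resp. `y`. Then `s₁ * s₂ ≤ (p₁ ⊔ x) * (p₂ ⊔ y)`, and distributing the product shows
that it lies in `P` as soon as `x * y` does; since `s₁ * s₂ ∈ S`, this cannot happen. -/

namespace ICQuantale

theorem mul_sup (x a b : Q) : x * (a ⊔ b) = x * a ⊔ x * b := by
  rw [← sSup_pair, mul_sSup, iSup_pair]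

theorem sup_mul (a b x : Q) : (a ⊔ b) * x = a * x ⊔ b * x := by
  rw [mul_comm, mul_sup, mul_comm x, mul_comm x]

theorem mul_le_mul_left' {a b : Q} (h : a ≤ b) (x : Q) : x * a ≤ x * b := by
  rw [← sup_eq_right.mpr h, mul_sup]
  exact le_sup_left

theorem mul_le_mul_of_le_of_le {a b c d : Q} (hab : a ≤ b) (hcd : c ≤ d) : a * c ≤ b * d :=
  calc a * c ≤ a * d := mul_le_mul_left' hcd a
    _ = d * a := mul_comm a d
    _ ≤ d * b := mul_le_mul_left' hab d
    _ = b * d := mul_comm d b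

theorem mul_le_left (x y : Q) : x * y ≤ x :=
  calc x * y ≤ x * ⊤ := mul_le_mul_left' le_top x
    _ = x := mul_top x

end ICQuantale

namespace IsIdeal

variable {I : Set Q}

theorem mul_mem_right (hI : IsIdeal I) {x : Q} (hx : x ∈ I) (y : Q) : x * y ∈ I :=
  hI.2.2 x hx _ (ICQuantale.mul_le_left x y)

theorem mul_mem_left (hI : IsIdeal I) (x : Q) {y : Q} (hy : y ∈ I) : x * y ∈ I :=
  ICQuantale.mul_comm y x ▸ hI.mul_mem_right hy x

theorem sup_mul_sup_mem (hI : IsIdeal I) {p₁ p₂ x y : Q} (hp₁ : p₁ ∈ I) (hp₂ : p₂ ∈ I)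
    (hxy : x * y ∈ I) : (p₁ ⊔ x) * (p₂ ⊔ y) ∈ I := by
  rw [ICQuantale.sup_mul, ICQuantale.mul_sup x]
  exact hI.2.1 _ (hI.mul_mem_right hp₁ _) _ (hI.2.1 _ (hI.mul_mem_left x hp₂) _ hxy)

end IsIdeal

def idealAdjoin (P : Set Q) (x : Q) : Set Q := {l | ∃ p ∈ P, l ≤ p ⊔ x}

theorem isIdeal_idealAdjoin {P : Set Q} (hP : IsIdeal P) (x : Q) : IsIdeal (idealAdjoin P x) := by
  obtain ⟨p₀, hp₀⟩ := hP.1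
  refine ⟨⟨x, p₀, hp₀, le_sup_right⟩, ?_, ?_⟩
  · rintro a ⟨p₁, hp₁, ha⟩ b ⟨p₂, hp₂, hb⟩
    exact ⟨p₁ ⊔ p₂, hP.2.1 p₁ hp₁ p₂ hp₂,
      sup_le (ha.trans (sup_le_sup_right le_sup_left x))
        (hb.trans (sup_le_sup_right le_sup_right x))⟩
  · rintro a ⟨p, hp, ha⟩ l hl
    exact ⟨p, hp, hl.trans ha⟩

theorem subset_idealAdjoin (P : Set Q) (x : Q) : P ⊆ idealAdjoin P x :=
  fun p hp => ⟨p, hp, le_sup_left⟩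

theorem mem_idealAdjoin_self {P : Set Q} (hP : IsIdeal P) (x : Q) : x ∈ idealAdjoin P x :=
  let ⟨p₀, hp₀⟩ := hP.1
  ⟨p₀, hp₀, le_sup_right⟩

theorem exists_le_sup_of_notMem {S P : Set Q} (hP : IsIdeal P)
    (hmax : ∀ J : Set Q, IsIdeal J → J ∩ S = ∅ → P ⊆ J → J = P) {x : Q} (hx : x ∉ P) :
    ∃ s ∈ S, ∃ p ∈ P, s ≤ p ⊔ x := by
  by_contra! h
  have hdisj : idealAdjoin P x ∩ S = ∅ :=
    Set.eq_empty_iff_forall_notMem.mpr fun s ⟨⟨p, hp, hs⟩, hsS⟩ => h s hsS p hp hs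
  have hJ := hmax _ (isIdeal_idealAdjoin hP x) hdisj (subset_idealAdjoin P x)
  exact hx (hJ ▸ mem_idealAdjoin_self hP x)

theorem stmt10 {S P : Set Q} (hS : MultClosed S) (hP : IsIdeal P) (hdisj : P ∩ S = ∅)
    (hmax : ∀ J : Set Q, IsIdeal J → J ∩ S = ∅ → P ⊆ J → J = P) :
    IsPrimeIdeal P := by
  have notMem_of_mem : ∀ s ∈ S, s ∉ P := fun s hs hsP =>
    Set.notMem_empty s (hdisj ▸ ⟨hsP, hs⟩)
  refine ⟨hP, fun hPuniv => notMem_of_mem ⊤ hS.1 (hPuniv ▸ Set.mem_univ ⊤), ?_⟩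
  intro x y hxy
  rw [or_iff_not_imp_left]
  intro hx
  by_contra hy
  obtain ⟨s₁, hs₁, p₁, hp₁, h₁⟩ := exists_le_sup_of_notMem hP hmax hx
  obtain ⟨s₂, hs₂, p₂, hp₂, h₂⟩ := exists_le_sup_of_notMem hP hmax hy
  have hprod : (p₁ ⊔ x) * (p₂ ⊔ y) ∈ P := hP.sup_mul_sup_mem hp₁ hp₂ hxy
  have hle : s₁ * s₂ ≤ (p₁ ⊔ x) * (p₂ ⊔ y) := ICQuantale.mul_le_mul_of_le_of_le h₁ h₂
  exact notMem_of_mem _ (hS.2 s₁ hs₁ s₂ hs₂) (hP.2.2 _ hprod _ hle)
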